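/- Let H be a densely defined self-adjoint operator on ℋ with unitary group U(t) = e^{−itH}, and let A be a Hilbert–Schmidt operator such that A maps ℋ into Dom H and both HA and HA* are (everywhere-defined) Hilbert–Schmidt operators. Then A ∈ Dom 𝐇, and 𝐇A = HA − (HA*)* = HA − overline(AH), where overline(AH) is the closure of the operator AH defined on Dom H. -/

import Mathlib

open Filter Topology ContinuousLinearMap
open scoped InnerProductSpace

noncomputable section

namespace LiouvilleFormalization

variable {H : Type*} [NormedAddCommGroup H] [InnerProductSpace ℂ H] [CompleteSpace H]

/-- `A` is Hilbert–Schmidt with respect to the orthonormal basis `e`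
(equivalently, with respect to every orthonormal basis). -/
def IsHS (e : HilbertBasis ℕ ℂ H) (A : H →L[ℂ] H) : Prop :=
  Summable fun n => ‖A (e n)‖ ^ 2

/-- The Hilbert–Schmidt norm of `A` computed in the orthonormal basis `e`. -/
def hsNorm (e : HilbertBasis ℕ ℂ H) (A : H →L[ℂ] H) : ℝ :=
  Real.sqrt (∑' n, ‖A (e n)‖ ^ 2)

/-- The Hilbert–Schmidt inner product `⟨A, B⟩_HS = Σₙ ⟨A eₙ, B eₙ⟩`. -/
def hsInner (e : HilbertBasis ℕ ℂ H) (A B : H →L[ℂ] H) : ℂ :=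
  ∑' n, (inner ℂ (A (e n)) (B (e n)) : ℂ)

/-- The conjugation superoperator `A ↦ U(t) A U(t)*`. -/
def conjSup (U : ℝ → H →L[ℂ] H) (t : ℝ) (A : H →L[ℂ] H) : H →L[ℂ] H :=
  U t ∘L A ∘L adjoint (U t)

/-- `U` is a strongly continuous one-parameter unitary group. -/
structure IsUnitaryGroup (U : ℝ → H →L[ℂ] H) : Prop where
  map_zero : U 0 = 1
  map_add : ∀ t s : ℝ, U (t + s) = U t ∘L U s
  unitary_left : ∀ t : ℝ, adjoint (U t) ∘L U t = 1
  unitary_right : ∀ t : ℝ, U t ∘L adjoint (U t) = 1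
  strong_continuous : ∀ ψ : H, Continuous fun t : ℝ => U t ψ

/-- A densely defined operator is self-adjoint if it coincides with its adjoint. -/
def IsSelfAdjointOp (T : H →ₗ.[ℂ] H) : Prop :=
  Dense (T.domain : Set H) ∧ T.adjoint = T

/-- `T` is the infinitesimal generator of the unitary group `U`, i.e. `U(t) = e^{-itT}`:
the domain of `T` is exactly the set of vectors where the strong derivative at `t = 0`
exists, and there the derivative equals `-i T ψ`. -/
structure IsGenerator (U : ℝ → H →L[ℂ] H) (T : H →ₗ.[ℂ] H) : Prop where
  mem_dom : ∀ ψ : H,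
    ψ ∈ T.domain ↔ ∃ L : H, Tendsto (fun t : ℝ => t⁻¹ • (U t ψ - ψ)) (𝓝[≠] 0) (𝓝 L)
  deriv : ∀ ψ : T.domain,
    Tendsto (fun t : ℝ => t⁻¹ • (U t ψ - (ψ : H))) (𝓝[≠] 0) (𝓝 ((-Complex.I) • T ψ))

/-- `L = 𝐇 A`: membership of `A` in the domain of the Liouville superoperator `𝐇`
generated by `U`, together with the value `𝐇 A = L`: the difference quotient
`(U(t) A U(t)* - A)/t` converges in Hilbert–Schmidt norm to `-i L`. -/
def HasLiouville (e : HilbertBasis ℕ ℂ H) (U : ℝ → H →L[ℂ] H) (A L : H →L[ℂ] H) : Prop :=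
  IsHS e A ∧ IsHS e L ∧
    Tendsto (fun t : ℝ => hsNorm e (t⁻¹ • (conjSup U t A - A) - (-Complex.I) • L))
      (𝓝[≠] 0) (𝓝 0)

/-- The commutator `[T, A] ψ = T(Aψ) - A(Tψ)` on the domain of `T`, for `A` mapping
`Dom T` into itself. -/
def commAt (T : H →ₗ.[ℂ] H) (A : H →L[ℂ] H)
    (hm : ∀ x : T.domain, (A x : H) ∈ T.domain) (ψ : T.domain) : H :=
  T ⟨A ψ, hm ψ⟩ - A (T ψ)

end LiouvilleFormalization

/-!
Write `B = HA`, `B' = HA*` and `S_X(t) = t⁻¹ (U(t) X - X) + i HX`, the difference quotient of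
`t ↦ U(t) X` minus its derivative at `0`. For every `t` there is the algebraic identity
`t⁻¹ (U A U* - A) + i (B - B'*) = S_A(t) U(t)* + S_{A*}(t)* - i (U(t) B* - B*)*`.
Column by column, `S_X(t) eₙ → 0` and `‖S_X(t) eₙ‖ ≤ 2 ‖HX eₙ‖` (mean value theorem for
`t ↦ U(t) ψ`), so `S_X(t) → 0` in Hilbert–Schmidt norm by dominated convergence; likewise
`U(t) B* - B* → 0` by strong continuity. The Hilbert–Schmidt norm is invariant under adjoints and
under multiplication by unitaries, so all three terms tend to `0`. Finally `B'*` agrees with `AH`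
on `Dom H` because `H` is symmetric, which determines it since `Dom H` is dense.
-/

namespace LiouvilleFormalization

variable {H : Type*} [NormedAddCommGroup H] [InnerProductSpace ℂ H]

section HilbertSchmidt

lemma hasSum_norm_inner_sq (e : HilbertBasis ℕ ℂ H) (x : H) :
    HasSum (fun m => ‖(inner ℂ (e m) x : ℂ)‖ ^ 2) (‖x‖ ^ 2) := by
  have h := e.hasSum_inner_mul_inner x x
  have hterm : ∀ m, (inner ℂ x (e m) : ℂ) * inner ℂ (e m) x
      = ((‖(inner ℂ (e m) x : ℂ)‖ ^ 2 : ℝ) : ℂ) := fun m => by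
    rw [← inner_conj_symm (e m) x, RCLike.mul_conj, RCLike.norm_conj]
    norm_cast
  rw [inner_self_eq_norm_sq_to_K] at h
  simp only [hterm] at h
  simpa [← Complex.ofReal_pow] using h.mapL Complex.reCLM

variable {e : HilbertBasis ℕ ℂ H}

lemma isHS_iff_memℓp {X : H →L[ℂ] H} : IsHS e X ↔ Memℓp (fun n => X (e n)) 2 := by
  rw [memℓp_gen_iff (by norm_num)]
  simp [IsHS]

def IsHS.columns {X : H →L[ℂ] H} (hX : IsHS e X) : lp (fun _ : ℕ => H) 2 :=
  ⟨fun n => X (e n), isHS_iff_memℓp.mp hX⟩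

lemma IsHS.hsNorm_eq_norm_columns {X : H →L[ℂ] H} (hX : IsHS e X) :
    hsNorm e X = ‖hX.columns‖ := by
  rw [lp.norm_eq_tsum_rpow (by norm_num), hsNorm, Real.sqrt_eq_rpow]
  simp [IsHS.columns]

lemma IsHS.add {X Y : H →L[ℂ] H} (hX : IsHS e X) (hY : IsHS e Y) : IsHS e (X + Y) :=
  isHS_iff_memℓp.mpr ((isHS_iff_memℓp.mp hX).add (isHS_iff_memℓp.mp hY))

lemma IsHS.const_smul {X : H →L[ℂ] H} (hX : IsHS e X) (c : ℂ) : IsHS e (c • X) :=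
  isHS_iff_memℓp.mpr ((isHS_iff_memℓp.mp hX).const_smul c)

lemma IsHS.sub {X Y : H →L[ℂ] H} (hX : IsHS e X) (hY : IsHS e Y) : IsHS e (X - Y) := by
  simpa [sub_eq_add_neg] using hX.add (hY.const_smul (-1))

lemma IsHS.of_norm_le {X Y : H →L[ℂ] H} (hY : IsHS e Y) {c : ℝ}
    (h : ∀ n, ‖X (e n)‖ ≤ c * ‖Y (e n)‖) : IsHS e X := by
  refine .of_nonneg_of_le (fun n => by positivity) (fun n => ?_) (hY.mul_left (c ^ 2))
  rw [← mul_pow]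
  exact pow_le_pow_left₀ (norm_nonneg _) (h n) 2

lemma hsNorm_add_le {X Y : H →L[ℂ] H} (hX : IsHS e X) (hY : IsHS e Y) :
    hsNorm e (X + Y) ≤ hsNorm e X + hsNorm e Y := by
  rw [hX.hsNorm_eq_norm_columns, hY.hsNorm_eq_norm_columns, (hX.add hY).hsNorm_eq_norm_columns]
  have hcols : (hX.add hY).columns = hX.columns + hY.columns := Subtype.ext rfl
  rw [hcols]
  exact norm_add_le _ _

lemma hsNorm_const_smul {X : H →L[ℂ] H} (hX : IsHS e X) (c : ℂ) :
    hsNorm e (c • X) = ‖c‖ * hsNorm e X := by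
  rw [hX.hsNorm_eq_norm_columns, (hX.const_smul c).hsNorm_eq_norm_columns]
  have hcols : (hX.const_smul c).columns = c • hX.columns := Subtype.ext rfl
  rw [hcols, lp.norm_const_smul (by norm_num)]

lemma hsNorm_congr {X Y : H →L[ℂ] H} (h : ∀ n, ‖X (e n)‖ = ‖Y (e n)‖) :
    hsNorm e X = hsNorm e Y := by
  simp only [hsNorm, h]

lemma isHS_congr {X Y : H →L[ℂ] H} (h : ∀ n, ‖X (e n)‖ = ‖Y (e n)‖) :
    IsHS e X ↔ IsHS e Y := by
  simp only [IsHS, h]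

variable [CompleteSpace H]

/-- `‖X*‖²_HS = Σₙ Σₘ |⟨eₘ, X eₙ⟩|² = ‖X‖²_HS`, by Parseval in each column and Tonelli. -/
lemma IsHS.hasSum_norm_adjoint_sq {X : H →L[ℂ] H} (hX : IsHS e X) :
    HasSum (fun n => ‖adjoint X (e n)‖ ^ 2) (∑' n, ‖X (e n)‖ ^ 2) := by
  set a : ℕ × ℕ → ℝ := fun p => ‖(inner ℂ (e p.2) (X (e p.1)) : ℂ)‖ ^ 2
  have hrow : ∀ n, HasSum (fun m => a (n, m)) (‖X (e n)‖ ^ 2) :=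
    fun n => hasSum_norm_inner_sq e (X (e n))
  have hcol : ∀ m, HasSum (fun n => a (n, m)) (‖adjoint X (e m)‖ ^ 2) := fun m => by
    convert hasSum_norm_inner_sq e (adjoint X (e m)) using 2 with n
    rw [norm_inner_symm, adjoint_inner_left]
  have ha : Summable a := (summable_prod_of_nonneg fun _ => by positivity).mpr
    ⟨fun n => (hrow n).summable, hX.congr fun n => (hrow n).tsum_eq.symm⟩
  have hsum : HasSum a (∑' n, ‖X (e n)‖ ^ 2) := by
    rw [(ha.hasSum.prod_fiberwise hrow).tsum_eq]
    exact ha.hasSum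
  exact ((Equiv.prodComm ℕ ℕ).hasSum_iff.mpr hsum).prod_fiberwise hcol

lemma IsHS.adjoint {X : H →L[ℂ] H} (hX : IsHS e X) : IsHS e (adjoint X) :=
  hX.hasSum_norm_adjoint_sq.summable

lemma hsNorm_adjoint {X : H →L[ℂ] H} (hX : IsHS e X) : hsNorm e (adjoint X) = hsNorm e X := by
  rw [hsNorm, hX.hasSum_norm_adjoint_sq.tsum_eq, hsNorm]

lemma norm_adjoint_comp_apply_of_mem_unitary {W : H →L[ℂ] H} (hW : W ∈ unitary (H →L[ℂ] H))
    (X : H →L[ℂ] H) (x : H) : ‖adjoint (X ∘L W) x‖ = ‖adjoint X x‖ := by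
  rw [adjoint_comp]
  exact norm_map_of_mem_unitary (Unitary.star_mem hW) _

lemma IsHS.comp_of_mem_unitary {X W : H →L[ℂ] H} (hX : IsHS e X)
    (hW : W ∈ unitary (H →L[ℂ] H)) : IsHS e (X ∘L W) := by
  rw [← adjoint_adjoint (X ∘L W)]
  exact ((isHS_congr fun n => norm_adjoint_comp_apply_of_mem_unitary hW X (e n)).mpr
    hX.adjoint).adjoint

lemma hsNorm_comp_of_mem_unitary {X W : H →L[ℂ] H} (hX : IsHS e X)
    (hW : W ∈ unitary (H →L[ℂ] H)) : hsNorm e (X ∘L W) = hsNorm e X := by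
  rw [← hsNorm_adjoint (hX.comp_of_mem_unitary hW), ← hsNorm_adjoint hX]
  exact hsNorm_congr fun n => norm_adjoint_comp_apply_of_mem_unitary hW X (e n)

end HilbertSchmidt

/-- `F t → 0` in Hilbert–Schmidt norm along `l`. Since `hsNorm` is `0` on operators that are not
Hilbert–Schmidt, eventual membership has to be part of the notion. -/
def TendstoHSZero {ι : Type*} (e : HilbertBasis ℕ ℂ H) (F : ι → H →L[ℂ] H) (l : Filter ι) :
    Prop :=
  (∀ᶠ t in l, IsHS e (F t)) ∧ Tendsto (fun t => hsNorm e (F t)) l (𝓝 0)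

namespace TendstoHSZero

variable {ι : Type*} {e : HilbertBasis ℕ ℂ H} {l : Filter ι} {F G : ι → H →L[ℂ] H}

lemma of_dominated {Y : H →L[ℂ] H} (hY : IsHS e Y) {c : ℝ}
    (hbound : ∀ᶠ t in l, ∀ n, ‖F t (e n)‖ ≤ c * ‖Y (e n)‖)
    (hlim : ∀ n, Tendsto (fun t => F t (e n)) l (𝓝 0)) : TendstoHSZero e F l := by
  refine ⟨hbound.mono fun t ht => hY.of_norm_le ht, ?_⟩
  have hsq : Tendsto (fun t => ∑' n, ‖F t (e n)‖ ^ 2) l (𝓝 (∑' _ : ℕ, (0 : ℝ))) := by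
    refine tendsto_tsum_of_dominated_convergence (hY.mul_left (c ^ 2)) (fun n => ?_) ?_
    · simpa using ((hlim n).norm.pow 2)
    · filter_upwards [hbound] with t ht n
      rw [norm_pow, norm_norm, ← mul_pow]
      exact pow_le_pow_left₀ (norm_nonneg _) (ht n) 2
  rw [tsum_zero] at hsq
  simpa [hsNorm, Function.comp_def] using (Real.continuous_sqrt.tendsto 0).comp hsq

lemma congr' (hF : TendstoHSZero e F l) (h : F =ᶠ[l] G) : TendstoHSZero e G l :=
  ⟨(hF.1.and h).mono fun _ ht => ht.2 ▸ ht.1,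
    hF.2.congr' (h.mono fun _ ht => congrArg (hsNorm e) ht)⟩

lemma add (hF : TendstoHSZero e F l) (hG : TendstoHSZero e G l) :
    TendstoHSZero e (F + G) l := by
  refine ⟨(hF.1.and hG.1).mono fun _ ht => ht.1.add ht.2, ?_⟩
  refine squeeze_zero' (.of_forall fun _ => Real.sqrt_nonneg _) ?_ (by simpa using hF.2.add hG.2)
  exact (hF.1.and hG.1).mono fun _ ht => hsNorm_add_le ht.1 ht.2

lemma mono_left {l' : Filter ι} (hF : TendstoHSZero e F l) (h : l' ≤ l) :
    TendstoHSZero e F l' :=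
  ⟨h hF.1, hF.2.mono_left h⟩

lemma const_smul (hF : TendstoHSZero e F l) (c : ℂ) : TendstoHSZero e (c • F) l := by
  refine ⟨hF.1.mono fun _ ht => ht.const_smul c, ?_⟩
  have h := hF.2.const_mul ‖c‖
  rw [mul_zero] at h
  exact h.congr' (hF.1.mono fun _ ht => (hsNorm_const_smul ht c).symm)

variable [CompleteSpace H]

lemma adjoint (hF : TendstoHSZero e F l) : TendstoHSZero e (fun t => adjoint (F t)) l :=
  ⟨hF.1.mono fun _ ht => ht.adjoint,
    hF.2.congr' (hF.1.mono fun _ ht => (hsNorm_adjoint ht).symm)⟩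

lemma comp_of_mem_unitary {W : ι → H →L[ℂ] H} (hF : TendstoHSZero e F l)
    (hW : ∀ t, W t ∈ unitary (H →L[ℂ] H)) : TendstoHSZero e (fun t => F t ∘L W t) l :=
  ⟨hF.1.mono fun t ht => ht.comp_of_mem_unitary (hW t),
    hF.2.congr' (hF.1.mono fun t ht => (hsNorm_comp_of_mem_unitary ht (hW t)).symm)⟩

end TendstoHSZero

variable [CompleteSpace H]

lemma adjoint_smul_real (s : ℝ) (X : H →L[ℂ] H) : adjoint (s • X) = s • adjoint X := by
  simp only [← Complex.coe_smul, map_smulₛₗ, Complex.conj_ofReal]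

lemma smul_conj_sub_eq (s : ℝ) (V X Y Y' : H →L[ℂ] H) :
    s • (V ∘L X ∘L adjoint V - X) - (-Complex.I) • (Y - adjoint Y') =
      (s • (V ∘L X - X) + Complex.I • Y) ∘L adjoint V
        + adjoint (s • (V ∘L adjoint X - adjoint X) + Complex.I • Y')
        + (-Complex.I) • adjoint (V ∘L adjoint Y - adjoint Y) := by
  simp only [map_add, map_sub, map_smulₛₗ, adjoint_smul_real, adjoint_comp, adjoint_adjoint,
    Complex.conj_I]
  ext x
  simp only [add_apply, sub_apply, smul_apply, comp_apply]
  module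

lemma IsSelfAdjointOp.isFormalAdjoint {T : H →ₗ.[ℂ] H} (hT : IsSelfAdjointOp T) :
    T.IsFormalAdjoint T := by
  simpa only [hT.2] using LinearPMap.adjoint_isFormalAdjoint hT.1

section UnitaryGroup

variable {U : ℝ → H →L[ℂ] H} {T : H →ₗ.[ℂ] H} {e : HilbertBasis ℕ ℂ H}

lemma IsUnitaryGroup.mem_unitary (hU : IsUnitaryGroup U) (t : ℝ) :
    U t ∈ unitary (H →L[ℂ] H) :=
  ⟨hU.unitary_left t, hU.unitary_right t⟩

lemma IsUnitaryGroup.norm_apply (hU : IsUnitaryGroup U) (t : ℝ) (x : H) : ‖U t x‖ = ‖x‖ :=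
  norm_map_of_mem_unitary (hU.mem_unitary t) x

lemma IsUnitaryGroup.tendstoHSZero_comp_sub (hU : IsUnitaryGroup U) {X : H →L[ℂ] H}
    (hX : IsHS e X) : TendstoHSZero e (fun t => U t ∘L X - X) (𝓝 0) := by
  refine .of_dominated hX (c := 2) (.of_forall fun t n => ?_) fun n => ?_
  · calc ‖U t (X (e n)) - X (e n)‖ ≤ ‖U t (X (e n))‖ + ‖X (e n)‖ := norm_sub_le _ _
      _ = 2 * ‖X (e n)‖ := by rw [hU.norm_apply]; ring
  · have h := (hU.strong_continuous (X (e n))).tendsto 0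
    rw [hU.map_zero, one_apply_eq_self] at h
    simpa using h.sub_const (X (e n))

lemma IsGenerator.hasDerivAt (hU : IsUnitaryGroup U) (hgen : IsGenerator U T) (ψ : T.domain)
    (s : ℝ) : HasDerivAt (fun r => U r (ψ : H)) ((-Complex.I) • U s (T ψ)) s := by
  have h0 : HasDerivAt (fun r => U r (ψ : H)) ((-Complex.I) • T ψ) 0 := by
    rw [hasDerivAt_iff_tendsto_slope_zero]
    simpa [hU.map_zero] using hgen.deriv ψ
  have hs : HasDerivAt (fun r => U (r - s) (ψ : H)) ((-Complex.I) • T ψ) s :=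
    HasDerivAt.comp_sub_const s s (by rwa [sub_self])
  convert ((U s).restrictScalars ℝ).hasFDerivAt.comp_hasDerivAt s hs using 1
  · ext r
    simp [← comp_apply, ← hU.map_add]
  · simp

lemma IsGenerator.norm_slope_le (hU : IsUnitaryGroup U) (hgen : IsGenerator U T) (ψ : T.domain)
    (t : ℝ) : ‖t⁻¹ • (U t (ψ : H) - ψ)‖ ≤ ‖T ψ‖ := by
  have hmvt : ‖U t (ψ : H) - ψ‖ ≤ ‖T ψ‖ * |t| := by
    simpa [hU.map_zero] using convex_univ.norm_image_sub_le_of_norm_hasDerivWithin_le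
      (fun s _ => (hgen.hasDerivAt hU ψ s).hasDerivWithinAt)
      (fun s _ => by simp [norm_smul, hU.norm_apply]) (Set.mem_univ 0) (Set.mem_univ t)
  rcases eq_or_ne t 0 with rfl | ht
  · simp
  rw [norm_smul, norm_inv, Real.norm_eq_abs, inv_mul_le_iff₀ (abs_pos.mpr ht), mul_comm]
  exact hmvt

lemma IsGenerator.tendstoHSZero_slope_sub_deriv (hU : IsUnitaryGroup U) (hgen : IsGenerator U T)
    {X Y : H →L[ℂ] H} (hY : IsHS e Y) (hX : ∀ φ, X φ ∈ T.domain)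
    (hXY : ∀ φ, Y φ = T ⟨X φ, hX φ⟩) :
    TendstoHSZero e (fun t : ℝ => t⁻¹ • (U t ∘L X - X) + Complex.I • Y) (𝓝[≠] 0) := by
  refine .of_dominated hY (c := 2) (.of_forall fun t n => ?_) fun n => ?_
  · have hslope := hgen.norm_slope_le hU ⟨X (e n), hX (e n)⟩ t
    rw [← hXY] at hslope
    calc ‖t⁻¹ • (U t (X (e n)) - X (e n)) + Complex.I • Y (e n)‖
        ≤ ‖t⁻¹ • (U t (X (e n)) - X (e n))‖ + ‖Complex.I • Y (e n)‖ := norm_add_le _ _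
      _ ≤ 2 * ‖Y (e n)‖ := by rw [norm_smul Complex.I, Complex.norm_I]; linarith
  · have hderiv := hgen.deriv ⟨X (e n), hX (e n)⟩
    rw [← hXY] at hderiv
    simpa using hderiv.add_const (Complex.I • Y (e n))

end UnitaryGroup

lemma IsSelfAdjointOp.adjoint_apply_eq {T : H →ₗ.[ℂ] H} (hT : IsSelfAdjointOp T)
    {A B' : H →L[ℂ] H} (h' : ∀ φ, adjoint A φ ∈ T.domain)
    (hB' : ∀ φ, B' φ = T ⟨adjoint A φ, h' φ⟩) (ψ : T.domain) : adjoint B' ψ = A (T ψ) := by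
  refine ext_inner_right ℂ fun φ => ?_
  rw [adjoint_inner_left, hB', ← hT.isFormalAdjoint ψ ⟨adjoint A φ, h' φ⟩, adjoint_inner_right]

/-- if `A` is Hilbert–Schmidt, maps `ℋ` into `Dom H`, and both `HA = B` and
`HA* = B'` are everywhere defined Hilbert–Schmidt operators, then `A ∈ Dom 𝐇` with
`𝐇A = HA − (HA*)* = HA − overline(AH)`: the limit defining `𝐇A` equals `B − (B')*`, and
`(B')*` coincides with the closure of `AH` (any continuous operator agreeing with `AH` on
`Dom H`). -/
theorem statement12 (e : HilbertBasis ℕ ℂ H) (T : H →ₗ.[ℂ] H) (hT : IsSelfAdjointOp T)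
    (U : ℝ → H →L[ℂ] H) (hU : IsUnitaryGroup U) (hgen : IsGenerator U T)
    (A : H →L[ℂ] H) (hA : IsHS e A)
    (h : ∀ φ : H, A φ ∈ T.domain) (h' : ∀ φ : H, adjoint A φ ∈ T.domain)
    (B B' : H →L[ℂ] H) (hBHS : IsHS e B) (hB'HS : IsHS e B')
    (hB : ∀ φ : H, B φ = T ⟨A φ, h φ⟩) (hB' : ∀ φ : H, B' φ = T ⟨adjoint A φ, h' φ⟩) :
    HasLiouville e U A (B - adjoint B') ∧
    ∀ C : H →L[ℂ] H, (∀ ψ : T.domain, C ψ = A (T ψ)) → adjoint B' = C := by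
  refine ⟨⟨hA, hBHS.sub hB'HS.adjoint, ?_⟩, fun C hC => ?_⟩
  · have hA_slope := (hgen.tendstoHSZero_slope_sub_deriv hU hBHS h hB).comp_of_mem_unitary
      fun t => Unitary.star_mem (hU.mem_unitary t)
    have hA'_slope := (hgen.tendstoHSZero_slope_sub_deriv hU hB'HS h' hB').adjoint
    have hB_cont := (((hU.tendstoHSZero_comp_sub hBHS.adjoint).mono_left
      (nhdsWithin_le_nhds (s := {0}ᶜ))).adjoint).const_smul (-Complex.I)
    refine (((hA_slope.add hA'_slope).add hB_cont).congr' (.of_forall fun t => ?_)).2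
    exact (smul_conj_sub_eq t⁻¹ (U t) A B B').symm
  · have heq : Set.EqOn (adjoint B') C T.domain := fun ψ hψ => by
      rw [hT.adjoint_apply_eq h' hB' ⟨ψ, hψ⟩, hC ⟨ψ, hψ⟩]
    exact DFunLike.coe_injective (Continuous.ext_on hT.1 (adjoint B').continuous C.continuous heq)

end LiouvilleFormalization
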